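/- Suppose each component of type l is replaced by a parallel block of v_l + 1 components (v_l ≥ 0 an integer), so that for each type l and each block position j ∈ {1,…,n_l} there are lifetimes U^{(l)}_{j,1},…,U^{(l)}_{j,v_l+1}, all lifetimes (over all types, blocks and positions) being mutually independent with common type-l distribution function F_l. Let the block lifetime be B^{(l)}_j := max_{1≤r≤v_l+1} U^{(l)}_{j,r}, and let T_R be a random variable such that {T_R > t} = {φ(Y(t)) = 1} for all t ≥ 0, where Y(t) is the state vector with (l,j) coordinate equal to 1 iff B^{(l)}_j > t. Then P(T_R > t) = Σ_{l_1=0}^{n_1} ⋯ Σ_{l_L=0}^{n_L} Φ(l_1,…,l_L) ∏_{k=1}^L C(n_k, l_k) · (1 − F_k(t)^{v_k+1})^{l_k} · (F_k(t)^{v_k+1})^{n_k−l_k}. -/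

import Mathlib

/-!
A parallel block survives past `t` iff one of its components does, so its lifetime
`B = max_r U_r` has `P(B ≤ t) = F(t)^(v+1)` by independence within the block, and distinct
blocks, being functions of disjoint families of independent lifetimes, are independent.
The redundant system is therefore an ordinary system whose type-`l` components have distribution
function `F_l^(v_l+1)`. For independent components, the probability of each state vector `x` is
`∏ (1 - F)^(working) F^(failed)`; grouping the states with `φ x = 1` by the number `l_k` of
working components of each type gives `Φ(l) ∏_k C(n_k, l_k)` states with the same probability.
-/

open MeasureTheory Finset ProbabilityTheory

/-- The survival signature of a structure function `φ`:
`Φ(c) = (∏_k C(n_k, c_k))⁻¹ · Σ_{x : exactly c_k working components of each type k} φ(x)`. -/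
noncomputable def survSig {L : ℕ} (n : Fin L → ℕ)
    (φ : ((l : Fin L) → Fin (n l) → Bool) → Bool) (c : Fin L → ℕ) : ℝ :=
  (∑ x : (l : Fin L) → Fin (n l) → Bool,
      if (∀ l, (Finset.univ.filter fun j => x l j = true).card = c l) ∧ φ x = true
      then (1 : ℝ) else 0)
    / ∏ l, (Nat.choose (n l) (c l) : ℝ)

lemma prod_ite_eq_pow_mul_pow {m : ℕ} {M : Type*} [CommMonoid M] (y : Fin m → Bool) (a b : M) :
    ∏ j, (if y j = true then a else b) = a ^ #{j | y j = true} * b ^ (m - #{j | y j = true}) := by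
  rw [prod_ite, prod_const, prod_const, filter_not, card_univ_sdiff, Fintype.card_fin]

lemma survSig_mul_prod_choose {L : ℕ} (n : Fin L → ℕ)
    (φ : ((l : Fin L) → Fin (n l) → Bool) → Bool) (c : (k : Fin L) → Fin (n k + 1))
    (w : Fin L → ℝ) :
    survSig n φ (fun k ↦ c k) * ∏ k, (n k).choose (c k) * w k
      = ∑ x : (l : Fin L) → Fin (n l) → Bool,
          if (∀ l, #{j | x l j = true} = (c l : ℕ)) ∧ φ x = true then ∏ k, w k else 0 := by
  have hchoose : ∏ k, ((n k).choose (c k) : ℝ) ≠ 0 :=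
    prod_ne_zero_iff.mpr fun k _ ↦ mod_cast (Nat.choose_pos (Fin.is_le (c k))).ne'
  rw [prod_mul_distrib, survSig, ← mul_assoc, div_mul_cancel₀ _ hchoose, sum_mul]
  simp_rw [ite_mul, one_mul, zero_mul]

lemma sum_survSig_mul_prod_choose {L : ℕ} (n : Fin L → ℕ)
    (φ : ((l : Fin L) → Fin (n l) → Bool) → Bool) (p q : Fin L → ℝ) :
    ∑ c : (k : Fin L) → Fin (n k + 1), survSig n φ (fun k ↦ c k)
        * ∏ k, (n k).choose (c k) * p k ^ (c k : ℕ) * q k ^ (n k - c k)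
      = ∑ x : (l : Fin L) → Fin (n l) → Bool,
          if φ x = true then ∏ k, ∏ j, (if x k j = true then p k else q k) else 0 := by
  simp_rw [mul_assoc, survSig_mul_prod_choose]
  rw [sum_comm]
  refine sum_congr rfl fun x _ ↦ ?_
  let count : (k : Fin L) → Fin (n k + 1) := fun k ↦
    ⟨#{j | x k j = true}, Nat.lt_succ_of_le (card_le_univ _ |>.trans_eq (Fintype.card_fin _))⟩
  rw [Fintype.sum_eq_single count fun c hc ↦
    if_neg fun h ↦ hc (funext fun k ↦ Fin.ext (h.1 k).symm)]
  simp_rw [prod_ite_eq_pow_mul_pow]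
  simp [count]

namespace ProbabilityTheory

variable {Ω ι : Type*} {mΩ : MeasurableSpace Ω} {P : Measure Ω}

lemma iIndepFun.curry {κ : ι → Type*} {𝓧 : (i : ι) → κ i → Type*}
    {m𝓧 : ∀ i j, MeasurableSpace (𝓧 i j)} {X : (i : ι) → (j : κ i) → Ω → 𝓧 i j}
    (mX : ∀ i j, Measurable (X i j))
    (h : iIndepFun (fun (p : (i : ι) × κ i) ω ↦ X p.1 p.2 ω) P) :
    iIndepFun (fun i ω ↦ (X i · ω)) P := by
  have := h.isProbabilityMeasure
  have : ∀ i j, IsProbabilityMeasure (P.map (X i j)) :=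
    fun i j ↦ Measure.isProbabilityMeasure_map (mX i j).aemeasurable
  have hblock : ∀ i, P.map (fun ω ↦ (X i · ω)) = Measure.infinitePi fun j ↦ P.map (X i j) :=
    fun i ↦ (h.precomp sigma_mk_injective).map_fun_eq_infinitePi_map (mX i)
  have hcurry : (fun ω i j ↦ X i j ω) = MeasurableEquiv.piCurry 𝓧 ∘ fun ω p ↦ X p.1 p.2 ω := rfl
  rw [iIndepFun_iff_map_fun_eq_infinitePi_map (fun i ↦ by fun_prop), hcurry,
    ← Measure.map_map (by fun_prop) (by fun_prop),
    h.map_fun_eq_infinitePi_map (fun p ↦ mX p.1 p.2),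
    Measure.infinitePi_map_piCurry fun i j ↦ P.map (X i j)]
  simp_rw [hblock]

lemma iIndepFun.measureReal_preimage_eq_sum_prod [Fintype ι] {β : ι → Type*}
    [∀ i, Fintype (β i)] [∀ i, MeasurableSpace (β i)] [∀ i, MeasurableSingletonClass (β i)]
    {Y : ∀ i, Ω → β i} (hY : ∀ i, Measurable (Y i)) (h : iIndepFun Y P)
    (s : Finset (∀ i, β i)) :
    P.real ((fun ω i ↦ Y i ω) ⁻¹' s) = ∑ y ∈ s, ∏ i, P.real (Y i ⁻¹' {y i}) := by
  have := h.isProbabilityMeasure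
  rw [← map_measureReal_apply (by fun_prop) s.measurableSet,
    h.map_fun_eq_pi_map fun i ↦ (hY i).aemeasurable, ← sum_measureReal_singleton]
  refine sum_congr rfl fun y _ ↦ ?_
  rw [measureReal_def, Measure.pi_singleton, ENNReal.toReal_prod]
  exact prod_congr rfl fun i _ ↦ map_measureReal_apply (hY i) (measurableSet_singleton _)

lemma iIndepFun.measureReal_sup'_le {ρ : Type*} [Fintype ρ] [Nonempty ρ] {U : ρ → Ω → ℝ}
    (h : iIndepFun U P) (t : ℝ) :
    P.real {ω | univ.sup' univ_nonempty (U · ω) ≤ t} = ∏ r, P.real {ω | U r ω ≤ t} := by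
  have hinter : {ω | univ.sup' univ_nonempty (U · ω) ≤ t} = ⋂ r, U r ⁻¹' Set.Iic t := by
    ext ω; simp [Finset.sup'_le_iff]
  rw [hinter, measureReal_def, h.meas_iInter fun r ↦ ⟨_, measurableSet_Iic, rfl⟩,
    ENNReal.toReal_prod]
  rfl

lemma measureReal_decide_lt_preimage [IsProbabilityMeasure P] {X : Ω → ℝ} (hX : Measurable X)
    (t : ℝ) (b : Bool) :
    P.real ((fun ω ↦ decide (t < X ω)) ⁻¹' {b})
      = if b then 1 - P.real {ω | X ω ≤ t} else P.real {ω | X ω ≤ t} := by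
  cases b
  · congr 1; ext ω; simp
  · rw [if_pos rfl, show {ω | X ω ≤ t} = X ⁻¹' Set.Iic t from rfl,
      ← probReal_compl_eq_one_sub (hX measurableSet_Iic)]
    congr 1; ext ω; simp

theorem measureReal_structure_eq_sum_survSig {L : ℕ} (n : Fin L → ℕ)
    {X : (l : Fin L) → Fin (n l) → Ω → ℝ} (hX : ∀ l j, Measurable (X l j))
    (hindep : iIndepFun (fun p : (l : Fin L) × Fin (n l) ↦ X p.1 p.2) P) (t : ℝ)
    (G : Fin L → ℝ) (hG : ∀ l j, P.real {ω | X l j ω ≤ t} = G l)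
    (φ : ((l : Fin L) → Fin (n l) → Bool) → Bool) :
    P.real {ω | φ (fun l j ↦ decide (t < X l j ω)) = true}
      = ∑ c : (k : Fin L) → Fin (n k + 1), survSig n φ (fun k ↦ c k)
          * ∏ k, (n k).choose (c k) * (1 - G k) ^ (c k : ℕ) * G k ^ (n k - c k) := by
  have := hindep.isProbabilityMeasure
  have hdecide : Measurable fun x : ℝ ↦ decide (t < x) :=
    measurable_to_bool <| by
      convert measurableSet_Ioi (a := t); ext; simp
  have hYmeas : ∀ p : (l : Fin L) × Fin (n l), Measurable fun ω ↦ decide (t < X p.1 p.2 ω) :=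
    fun p ↦ hdecide.comp (hX p.1 p.2)
  have hY : iIndepFun (fun (p : (l : Fin L) × Fin (n l)) ω ↦ decide (t < X p.1 p.2 ω)) P :=
    hindep.comp (fun _ x ↦ decide (t < x)) fun _ ↦ hdecide
  have hevent : {ω | φ (fun l j ↦ decide (t < X l j ω)) = true}
      = (fun ω (p : (l : Fin L) × Fin (n l)) ↦ decide (t < X p.1 p.2 ω)) ⁻¹'
        ↑({y | φ (Sigma.curry y) = true} : Finset _) := by
    ext ω; simp; rfl
  rw [hevent, hY.measureReal_preimage_eq_sum_prod hYmeas,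
    sum_survSig_mul_prod_choose, sum_filter, ← (Equiv.piCurry fun _ _ ↦ Bool).sum_comp]
  refine sum_congr rfl fun y _ ↦ if_congr Iff.rfl ?_ rfl
  simp_rw [measureReal_decide_lt_preimage (hX _ _), hG, Fintype.prod_sigma]
  rfl

end ProbabilityTheory

theorem stmt_7_general
    {Ω : Type*} [MeasurableSpace Ω] (P : Measure Ω)
    {L : ℕ} (n : Fin L → ℕ)
    (v : Fin L → ℕ)
    (U : (l : Fin L) → Fin (n l) → Fin (v l + 1) → Ω → ℝ)
    (hUmeas : ∀ l j r, Measurable (U l j r))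
    (hindep : iIndepFun
      (fun p : Σ l : Fin L, Fin (n l) × Fin (v l + 1) => fun ω => U p.1 p.2.1 p.2.2 ω) P)
    (F : Fin L → ℝ → ℝ)
    (hF : ∀ l j r x, (P {ω | U l j r ω ≤ x}).toReal = F l x)
    (φ : ((l : Fin L) → Fin (n l) → Bool) → Bool)
    (TR : Ω → ℝ)
    (hT : ∀ t : ℝ, 0 ≤ t →
      {ω | t < TR ω}
        = {ω | φ (fun l j =>
            decide (t < Finset.univ.sup' Finset.univ_nonempty
              (fun r : Fin (v l + 1) => U l j r ω))) = true})
    (t : ℝ) (ht : 0 ≤ t) :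
    (P {ω | t < TR ω}).toReal
    = ∑ l : (k : Fin L) → Fin (n k + 1),
        survSig n φ (fun k => (l k : ℕ))
          * ∏ k, (Nat.choose (n k) (l k) : ℝ)
              * (1 - F k t ^ (v k + 1)) ^ (l k : ℕ)
              * (F k t ^ (v k + 1)) ^ (n k - (l k : ℕ)) := by
  let B : (l : Fin L) → Fin (n l) → Ω → ℝ :=
    fun l j ω ↦ univ.sup' univ_nonempty fun r : Fin (v l + 1) ↦ U l j r ω
  have hsup : ∀ l, Measurable fun c : Fin (v l + 1) → ℝ ↦ univ.sup' univ_nonempty c :=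
    fun l ↦ by fun_prop
  have hBmeas : ∀ l j, Measurable (B l j) :=
    fun l j ↦ (hsup l).comp (measurable_pi_lambda _ fun r ↦ hUmeas l j r)
  have hblocks : iIndepFun (fun (k : (l : Fin L) × Fin (n l)) ω r ↦ U k.1 k.2 r ω) P :=
    iIndepFun.curry (fun k r ↦ hUmeas k.1 k.2 r) <|
      hindep.precomp (g := fun q : (k : (l : Fin L) × Fin (n l)) × Fin (v k.1 + 1) ↦
        ⟨q.1.1, q.1.2, q.2⟩) fun q q' h ↦ by
        obtain ⟨⟨l, j⟩, r⟩ := q; obtain ⟨⟨l', j'⟩, r'⟩ := q'; cases h; rfl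
  have hB : iIndepFun (fun k : (l : Fin L) × Fin (n l) ↦ B k.1 k.2) P :=
    hblocks.comp _ fun k ↦ hsup k.1
  have hBlaw : ∀ l j, P.real {ω | B l j ω ≤ t} = F l t ^ (v l + 1) := fun l j ↦ by
    rw [(hindep.precomp (g := fun r ↦ ⟨l, j, r⟩) fun r r' h ↦ by cases h; rfl).measureReal_sup'_le]
    simp [measureReal_def, hF]
  rw [hT t ht]
  exact measureReal_structure_eq_sum_survSig n hBmeas hB t _ hBlaw φ

/-- If each component of type `l` is replaced by a parallel block of
`v_l + 1` i.i.d. components (all lifetimes mutually independent, type-`l` distribution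
function `F_l`), then the reliability of the redundant system `T_R` equals
`Σ_l Φ(l) ∏_k C(n_k, l_k) (1 − F_k(t)^{v_k+1})^{l_k} (F_k(t)^{v_k+1})^{n_k−l_k}`. -/
theorem stmt_7
    {Ω : Type*} [MeasurableSpace Ω] (P : Measure Ω) [IsProbabilityMeasure P]
    {L : ℕ} (hL : 1 ≤ L) (n : Fin L → ℕ) (hn : ∀ l, 1 ≤ n l)
    (v : Fin L → ℕ)
    (U : (l : Fin L) → Fin (n l) → Fin (v l + 1) → Ω → ℝ)
    (hUmeas : ∀ l j r, Measurable (U l j r))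
    (hindep : iIndepFun
      (fun p : Σ l : Fin L, Fin (n l) × Fin (v l + 1) => fun ω => U p.1 p.2.1 p.2.2 ω) P)
    (F : Fin L → ℝ → ℝ)
    (hF : ∀ l j r x, (P {ω | U l j r ω ≤ x}).toReal = F l x)
    (φ : ((l : Fin L) → Fin (n l) → Bool) → Bool) (hφ : Monotone φ)
    (TR : Ω → ℝ) (hTR : Measurable TR)
    (hT : ∀ t : ℝ, 0 ≤ t →
      {ω | t < TR ω}
        = {ω | φ (fun l j =>
            decide (t < Finset.univ.sup' Finset.univ_nonempty
              (fun r : Fin (v l + 1) => U l j r ω))) = true})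
    (t : ℝ) (ht : 0 ≤ t) :
    (P {ω | t < TR ω}).toReal
    = ∑ l : (k : Fin L) → Fin (n k + 1),
        survSig n φ (fun k => (l k : ℕ))
          * ∏ k, (Nat.choose (n k) (l k) : ℝ)
              * (1 - F k t ^ (v k + 1)) ^ (l k : ℕ)
              * (F k t ^ (v k + 1)) ^ (n k - (l k : ℕ)) :=
  stmt_7_general P n v U hUmeas hindep F hF φ TR hT t ht
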